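/- Let A be a simple finite-dimensional algebra over a field F of characteristic zero with a comultiplication Δ such that the Drinfeld double D(A) is a direct sum A₁ ⊕ A₂ of two proper simple ideals. Then for each i = 1, 2 there exists a linear map φᵢ : A* → A such that f − φᵢ(f) ∈ Aᵢ for all f ∈ A*, and moreover Aᵢ = { f − φᵢ(f) : f ∈ A* }. -/

import Mathlib

open TensorProduct

/-- `I` is a (two-sided) ideal for the product `prod`. -/
def IsIdealP {F M : Type*} [Field F] [AddCommGroup M] [Module F M]
    (prod : M → M → M) (I : Submodule F M) : Prop :=
  ∀ x ∈ I, ∀ y : M, prod x y ∈ I ∧ prod y x ∈ I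

/-- The ideal `I` is simple as an algebra with the restricted product. -/
def IsSimpleIdealP {F M : Type*} [Field F] [AddCommGroup M] [Module F M]
    (prod : M → M → M) (I : Submodule F M) : Prop :=
  (∃ x ∈ I, ∃ y ∈ I, prod x y ≠ 0) ∧
    ∀ J : Submodule F M, J ≤ I →
      (∀ x ∈ J, ∀ y ∈ I, prod x y ∈ J ∧ prod y x ∈ J) → J = ⊥ ∨ J = I

/-- The multiplication of the Drinfeld double `D(A) = A ⊕ A*` associated with the
bilinear product `mul` and the comultiplication `Δ`:
`(a + f)(b + g) = (ab + f⇀b + a↼g) + (fg + f⇽b + a⇁g)`. -/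
noncomputable def dmul {F A : Type*} [Field F] [AddCommGroup A] [Module F A]
    (mul : A →ₗ[F] A →ₗ[F] A) (Δ : A →ₗ[F] A ⊗[F] A)
    (p q : A × Module.Dual F A) : A × Module.Dual F A :=
  (mul p.1 q.1
      + TensorProduct.rid F A (LinearMap.lTensor A p.2 (Δ q.1))
      + TensorProduct.lid F A (LinearMap.rTensor A q.2 (Δ p.1)),
    Δ.dualMap (TensorProduct.dualDistrib F A A (p.2 ⊗ₜ[F] q.2))
      + p.2.comp (mul q.1)
      + q.2.comp (mul.flip p.1))

/-!
The elements of an ideal `B` of `D(A)` with zero `A*`-component form an ideal of `A`, because `A`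
is a subalgebra of `D(A)`. If this ideal were all of `A`, a complementary ideal `C` would satisfy
`C A ⊆ B ∩ C = 0`; the `A*`-components of `C` would then vanish on `A² = A`, so `C ⊆ B` and
`C = 0`. Hence both summands project injectively onto `A*`; as their dimensions add up to
`2 dim A = 2 dim A*`, each projects isomorphically, i.e. it is the graph of a linear map `A* → A`.
-/

open Module

section SimpleAlgebra

variable {F A : Type*} [Field F] [AddCommGroup A] [Module F A]

def IsSimpleMul (mul : A →ₗ[F] A →ₗ[F] A) : Prop :=
  (∃ x y : A, mul x y ≠ 0) ∧
    ∀ I : Submodule F A, (∀ x ∈ I, ∀ y : A, mul x y ∈ I ∧ mul y x ∈ I) → I = ⊥ ∨ I = ⊤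

variable {mul : A →ₗ[F] A →ₗ[F] A}

theorem IsSimpleMul.span_range_mul_eq_top (hA : IsSimpleMul mul) :
    Submodule.span F (Set.range fun p : A × A => mul p.1 p.2) = ⊤ := by
  have hprod : ∀ x y : A, mul x y ∈ Submodule.span F (Set.range fun p : A × A => mul p.1 p.2) :=
    fun x y => Submodule.subset_span ⟨(x, y), rfl⟩
  refine (hA.2 _ fun x _ y => ⟨hprod x y, hprod y x⟩).resolve_left fun hbot => ?_
  obtain ⟨x, y, hxy⟩ := hA.1
  exact hxy (by simpa [hbot] using hprod x y)

theorem IsSimpleMul.dual_eq_zero (hA : IsSimpleMul mul) {f : Dual F A}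
    (hf : ∀ x y : A, f (mul x y) = 0) : f = 0 :=
  LinearMap.ext_on_range hA.span_range_mul_eq_top fun p => hf p.1 p.2

end SimpleAlgebra

section Graph

variable {K M N : Type*} [Field K] [AddCommGroup M] [Module K M] [AddCommGroup N] [Module K N]

theorem Submodule.injective_snd_domRestrict {B : Submodule K (M × N)}
    (hB : B.comap (LinearMap.inl K M N) = ⊥) :
    Function.Injective ((LinearMap.snd K M N).domRestrict B) := by
  refine (injective_iff_map_eq_zero _).2 fun p hp => ?_
  have hp1 : (p : M × N).1 ∈ B.comap (LinearMap.inl K M N) := by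
    change ((p : M × N).1, 0) ∈ B
    rw [← show (p : M × N) = ((p : M × N).1, 0) from Prod.ext rfl hp]
    exact p.2
  rw [hB, Submodule.mem_bot] at hp1
  exact Subtype.ext (Prod.ext hp1 hp)

theorem Submodule.finrank_le_of_comap_inl_eq_bot [FiniteDimensional K N] {B : Submodule K (M × N)}
    (hB : B.comap (LinearMap.inl K M N) = ⊥) : finrank K B ≤ finrank K N :=
  LinearMap.finrank_le_finrank_of_injective (injective_snd_domRestrict hB)

theorem Submodule.exists_eq_range_prod_id [FiniteDimensional K M] [FiniteDimensional K N]
    {B : Submodule K (M × N)} (hB : B.comap (LinearMap.inl K M N) = ⊥)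
    (hdim : finrank K N ≤ finrank K B) :
    ∃ ψ : N →ₗ[K] M, B = LinearMap.range (ψ.prod LinearMap.id) := by
  let e : B ≃ₗ[K] N := LinearMap.linearEquivOfInjective _ (injective_snd_domRestrict hB)
    (le_antisymm (finrank_le_of_comap_inl_eq_bot hB) hdim)
  refine ⟨LinearMap.fst K M N ∘ₗ B.subtype ∘ₗ e.symm.toLinearMap, ?_⟩
  have hgraph : (LinearMap.fst K M N ∘ₗ B.subtype ∘ₗ e.symm.toLinearMap).prod LinearMap.id =
      B.subtype ∘ₗ e.symm.toLinearMap := by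
    ext f
    · rfl
    · exact (e.apply_symm_apply f).symm
  rw [hgraph, LinearMap.range_comp_of_range_eq_top _ e.symm.range, Submodule.range_subtype]

end Graph

section DrinfeldDouble

variable {F A : Type*} [Field F] [AddCommGroup A] [Module F A]
  {mul : A →ₗ[F] A →ₗ[F] A} {Δ : A →ₗ[F] A ⊗[F] A}

theorem dmul_inl_inl (a b : A) :
    dmul mul Δ (a, 0) (b, 0) = (mul a b, 0) := by
  simp [dmul]

theorem snd_dmul_inl (p : A × Dual F A) (b : A) :
    (dmul mul Δ p (b, 0)).2 = p.2 ∘ₗ mul b := by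
  simp [dmul]

variable {B C : Submodule F (A × Dual F A)}

theorem eq_bot_of_forall_inl_mem (hA : IsSimpleMul mul) (hB : IsIdealP (dmul mul Δ) B)
    (hC : IsIdealP (dmul mul Δ) C) (hBC : Disjoint B C) (hinl : ∀ a : A, (a, 0) ∈ B) :
    C = ⊥ := by
  refine (Submodule.eq_bot_iff C).2 fun p hp => ?_
  have hann : ∀ b : A, dmul mul Δ p (b, 0) = 0 := fun b =>
    (Submodule.disjoint_def.1 hBC) _ (hB _ (hinl b) p).2 (hC p hp _).1
  have hp2 : p.2 = 0 := hA.dual_eq_zero fun b c => by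
    simpa [snd_dmul_inl] using congrArg (fun q : A × Dual F A => q.2 c) (hann b)
  have hpB : p ∈ B := by
    simpa [← hp2] using hinl p.1
  exact Submodule.disjoint_def.1 hBC p hpB hp

theorem comap_inl_eq_bot (hA : IsSimpleMul mul) (hB : IsIdealP (dmul mul Δ) B)
    (hC : IsIdealP (dmul mul Δ) C) (hBC : Disjoint B C) (hC0 : C ≠ ⊥) :
    B.comap (LinearMap.inl F A (Dual F A)) = ⊥ := by
  set J := B.comap (LinearMap.inl F A (Dual F A))
  have hJ : ∀ a ∈ J, ∀ b : A, mul a b ∈ J ∧ mul b a ∈ J := fun a ha b =>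
    ⟨show (mul a b, 0) ∈ B from dmul_inl_inl (Δ := Δ) a b ▸ (hB (a, 0) ha (b, 0)).1,
      show (mul b a, 0) ∈ B from dmul_inl_inl (Δ := Δ) b a ▸ (hB (a, 0) ha (b, 0)).2⟩
  refine (hA.2 J hJ).resolve_right fun htop => hC0 ?_
  exact eq_bot_of_forall_inl_mem hA hB hC hBC fun a => (htop ▸ Submodule.mem_top : a ∈ J)

theorem exists_graph_of_isCompl [FiniteDimensional F A] (hA : IsSimpleMul mul)
    (hB : IsIdealP (dmul mul Δ) B) (hC : IsIdealP (dmul mul Δ) C) (hBC : IsCompl B C)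
    (hB0 : B ≠ ⊥) (hC0 : C ≠ ⊥) :
    ∃ φ : Dual F A →ₗ[F] A, (∀ f : Dual F A, ((-φ f, f) : A × Dual F A) ∈ B) ∧
      (B : Set (A × Dual F A)) = Set.range fun f : Dual F A => (-φ f, f) := by
  have hBinl := comap_inl_eq_bot hA hB hC hBC.disjoint hC0
  have hCinl := comap_inl_eq_bot hA hC hB hBC.disjoint.symm hB0
  have hdim : finrank F (Dual F A) ≤ finrank F B := by
    have hsum := Submodule.finrank_add_eq_of_isCompl hBC
    have hC_le := Submodule.finrank_le_of_comap_inl_eq_bot hCinl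
    rw [Module.finrank_prod, Subspace.dual_finrank_eq] at hsum
    rw [Subspace.dual_finrank_eq] at hC_le ⊢
    omega
  obtain ⟨ψ, hψ⟩ := Submodule.exists_eq_range_prod_id hBinl hdim
  refine ⟨-ψ, fun f => ?_, ?_⟩
  · rw [hψ]
    exact ⟨f, by simp⟩
  · rw [hψ, LinearMap.coe_range]
    congr 1
    ext f <;> simp

end DrinfeldDouble

theorem stmt2_general {F A : Type*} [Field F] [AddCommGroup A] [Module F A]
    [FiniteDimensional F A] (mul : A →ₗ[F] A →ₗ[F] A)
    -- `A` is simple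
    (hsimple : (∃ x y : A, mul x y ≠ 0) ∧
      ∀ I : Submodule F A, (∀ x ∈ I, ∀ y : A, mul x y ∈ I ∧ mul y x ∈ I) → I = ⊥ ∨ I = ⊤)
    -- a comultiplication on `A`
    (Δ : A →ₗ[F] A ⊗[F] A)
    -- `D(A) = A₁ ⊕ A₂`, a direct sum of two proper simple ideals
    (A₁ A₂ : Submodule F (A × Module.Dual F A))
    (h1b : A₁ ≠ ⊥) (h2b : A₂ ≠ ⊥)
    (hcompl : IsCompl A₁ A₂)
    (hid1 : IsIdealP (dmul mul Δ) A₁) (hid2 : IsIdealP (dmul mul Δ) A₂)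
    :
    ∃ φ₁ φ₂ : Module.Dual F A →ₗ[F] A,
      (∀ f : Module.Dual F A, ((-φ₁ f, f) : A × Module.Dual F A) ∈ A₁) ∧
      (∀ f : Module.Dual F A, ((-φ₂ f, f) : A × Module.Dual F A) ∈ A₂) ∧
      (A₁ : Set (A × Module.Dual F A)) = Set.range (fun f : Module.Dual F A => (-φ₁ f, f)) ∧
      (A₂ : Set (A × Module.Dual F A)) = Set.range (fun f : Module.Dual F A => (-φ₂ f, f)) := by
  obtain ⟨φ₁, hφ₁, hrange₁⟩ := exists_graph_of_isCompl hsimple hid1 hid2 hcompl h1b h2b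
  obtain ⟨φ₂, hφ₂, hrange₂⟩ := exists_graph_of_isCompl hsimple hid2 hid1 hcompl.symm h2b h1b
  exact ⟨φ₁, φ₂, hφ₁, hφ₂, hrange₁, hrange₂⟩

theorem stmt2 {F A : Type*} [Field F] [CharZero F] [AddCommGroup A] [Module F A]
    [FiniteDimensional F A] (mul : A →ₗ[F] A →ₗ[F] A)
    -- `A` is simple
    (hsimple : (∃ x y : A, mul x y ≠ 0) ∧
      ∀ I : Submodule F A, (∀ x ∈ I, ∀ y : A, mul x y ∈ I ∧ mul y x ∈ I) → I = ⊥ ∨ I = ⊤)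
    -- a comultiplication on `A`
    (Δ : A →ₗ[F] A ⊗[F] A)
    -- `D(A) = A₁ ⊕ A₂`, a direct sum of two proper simple ideals
    (A₁ A₂ : Submodule F (A × Module.Dual F A))
    (h1b : A₁ ≠ ⊥) (h1t : A₁ ≠ ⊤) (h2b : A₂ ≠ ⊥) (h2t : A₂ ≠ ⊤)
    (hcompl : IsCompl A₁ A₂)
    (hid1 : IsIdealP (dmul mul Δ) A₁) (hid2 : IsIdealP (dmul mul Δ) A₂)
    (hs1 : IsSimpleIdealP (dmul mul Δ) A₁) (hs2 : IsSimpleIdealP (dmul mul Δ) A₂)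
    :
    ∃ φ₁ φ₂ : Module.Dual F A →ₗ[F] A,
      (∀ f : Module.Dual F A, ((-φ₁ f, f) : A × Module.Dual F A) ∈ A₁) ∧
      (∀ f : Module.Dual F A, ((-φ₂ f, f) : A × Module.Dual F A) ∈ A₂) ∧
      (A₁ : Set (A × Module.Dual F A)) = Set.range (fun f : Module.Dual F A => (-φ₁ f, f)) ∧
      (A₂ : Set (A × Module.Dual F A)) = Set.range (fun f : Module.Dual F A => (-φ₂ f, f)) :=
  stmt2_general mul hsimple Δ A₁ A₂ h1b h2b hcompl hid1 hid2
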